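/- Every bounded set A ⊆ ℝ^d is contained in a closed ball of radius √(d/(2d+2)) · diam(A). (Jung's inequality.) -/

import Mathlib

/-!
In dimension `n`, by Helly's theorem applied to the balls of radius `r = √(n / (2n + 2)) · diam A`
around the points of `A`, it suffices to cover any `n + 1` points `S`. Take a Chebyshev centre
`c` of `S`, at distance `ρ` from its farthest points `T`. Minimality forces `c` into the convex
hull of `T`: otherwise moving `c` along a direction separating it from that hull brings it closer
to all of `T` at once. Writing `c = ∑ w_p p`, Huygens' identity gives
`2ρ² ≤ (1 - w_p) · diam² A` at every `p ∈ T`, and averaging with the weights `w_p` together with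
`∑ w_p² ≥ 1 / #T ≥ 1 / (n + 1)` yields `ρ ≤ r`.
-/

open Metric

noncomputable section

abbrev Euc (d : ℕ) := EuclideanSpace ℝ (Fin d)

def Spherical {d : ℕ} (A : Set (Euc d)) : Prop :=
  ∃ (c : Euc d) (ρ : ℝ), A ⊆ Metric.sphere c ρ

noncomputable def circumradius {d : ℕ} (A : Set (Euc d)) : ℝ :=
  sInf {ρ : ℝ | ∃ c : Euc d, A ⊆ Metric.closedBall c ρ}

def SetCongruent {d D : ℕ} (A : Set (Euc d)) (A' : Set (Euc D)) : Prop :=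
  ∃ f : Euc d → Euc D, Isometry f ∧ f '' A = A'

def DiameterRamsey {d : ℕ} (A : Set (Euc d)) : Prop :=
  ∀ r : ℕ, 0 < r → ∃ (n : ℕ) (B : Set (Euc n)), B.Finite ∧
    Metric.diam B = Metric.diam A ∧
    ∀ χ : Euc n → Fin r, ∃ A' : Set (Euc n), A' ⊆ B ∧ SetCongruent A A' ∧
      ∀ x ∈ A', ∀ y ∈ A', χ x = χ y

open Filter Finset Module RealInnerProductSpace Topology

theorem Finset.exists_forall_sup'_dist_le {X : Type*} [PseudoMetricSpace X] [ProperSpace X]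
    (S : Finset X) (hS : S.Nonempty) :
    ∃ c : X, ∀ c', S.sup' hS (dist · c) ≤ S.sup' hS (dist · c') := by
  obtain ⟨p₀, hp₀⟩ := hS
  refine Continuous.exists_forall_le' (Continuous.finset_sup'_apply _ fun p _ => by fun_prop) p₀
    ?_
  filter_upwards [(tendsto_dist_left_cocompact_atTop p₀).eventually_ge_atTop
    (S.sup' ⟨p₀, hp₀⟩ (dist · p₀))] with c hc
  exact hc.trans (le_sup' (dist · c) hp₀)

theorem le_sqrt_div_mul_of_two_mul_sq_mul_le {ρ D m n : ℝ} (hD : 0 ≤ D) (hm : 1 ≤ m)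
    (hmn : m ≤ n + 1) (h : 2 * ρ ^ 2 * m ≤ D ^ 2 * (m - 1)) :
    ρ ≤ √(n / (2 * n + 2)) * D := by
  rw [← Real.sqrt_sq hD, ← Real.sqrt_mul (div_nonneg (by linarith) (by linarith))]
  refine Real.le_sqrt_of_sq_le ?_
  rw [div_mul_eq_mul_div, le_div_iff₀ (by linarith)]
  refine le_of_mul_le_mul_left ?_ (by linarith : 0 < m)
  nlinarith [mul_le_mul_of_nonneg_right h (by linarith : 0 ≤ n + 1),
    mul_nonneg (sq_nonneg D) (by linarith : 0 ≤ n + 1 - m)]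

section InnerProductSpace

variable {E : Type*} [NormedAddCommGroup E] [InnerProductSpace ℝ E]

theorem exists_forall_inner_sub_pos_of_notMem [CompleteSpace E] {K : Set E} (hconv : Convex ℝ K)
    (hclosed : IsClosed K) {x : E} (hx : x ∉ K) : ∃ v : E, ∀ p ∈ K, 0 < ⟪v, p - x⟫ := by
  obtain ⟨f, u, hfx, hf⟩ := geometric_hahn_banach_point_closed hconv hclosed hx
  refine ⟨(InnerProductSpace.toDual ℝ E).symm f, fun p hp => ?_⟩
  rw [inner_sub_right, InnerProductSpace.toDual_symm_apply, InnerProductSpace.toDual_symm_apply]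
  linarith [hf p hp]

theorem dist_add_smul_lt {p c v : E} {t : ℝ} (ht₀ : 0 < t)
    (ht : t * ‖v‖ ^ 2 < 2 * ⟪v, p - c⟫) :
    dist p (c + t • v) < dist p c := by
  refine lt_of_pow_lt_pow_left₀ 2 dist_nonneg ?_
  rw [dist_eq_norm, dist_eq_norm, show p - (c + t • v) = (p - c) - t • v by abel,
    norm_sub_sq_real, real_inner_smul_right, norm_smul, Real.norm_of_nonneg ht₀.le,
    real_inner_comm]
  nlinarith

theorem Finset.mem_convexHull_farthest_of_forall_sup'_dist_le [CompleteSpace E] (S : Finset E)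
    (hS : S.Nonempty) {c : E} (hc : ∀ c', S.sup' hS (dist · c) ≤ S.sup' hS (dist · c')) :
    c ∈ convexHull ℝ (↑{p ∈ S | dist p c = S.sup' hS (dist · c)} : Set E) := by
  set ρ := S.sup' hS (dist · c)
  by_contra hnot
  obtain ⟨v, hv⟩ := exists_forall_inner_sub_pos_of_notMem (convex_convexHull ℝ _)
    ((Set.toFinite _).isCompact_convexHull (𝕜 := ℝ)).isClosed hnot
  have hcloser : ∀ᶠ t in 𝓝[>] (0 : ℝ), ∀ p ∈ S, dist p (c + t • v) < ρ := by
    refine (eventually_all_finset S).2 fun p hp => ?_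
    rcases (le_sup' (dist · c) hp : dist p c ≤ ρ).eq_or_lt with hfar | hnear
    · have hpos := hv p (subset_convexHull ℝ _ (mem_filter.2 ⟨hp, hfar⟩))
      have hsmall : ∀ᶠ t in 𝓝 (0 : ℝ), t * ‖v‖ ^ 2 < 2 * ⟪v, p - c⟫ :=
        ((continuous_id.mul continuous_const).tendsto' 0 0 (zero_mul _)).eventually_lt_const
          (by positivity)
      filter_upwards [self_mem_nhdsWithin, nhdsWithin_le_nhds hsmall] with t ht₀ ht
      exact (dist_add_smul_lt ht₀ ht).trans_eq hfar
    · have hcont : Continuous fun t : ℝ => dist p (c + t • v) :=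
        continuous_const.dist (continuous_const.add (continuous_id.smul continuous_const))
      exact nhdsWithin_le_nhds <| (hcont.tendsto' 0 _ (by simp)).eventually_lt_const hnear
  obtain ⟨t, ht⟩ := hcloser.exists
  exact (hc (c + t • v)).not_gt ((sup'_lt_iff hS).2 ht)

theorem Finset.sum_mul_norm_sub_sq_eq {ι : Type*} (s : Finset ι) {w : ι → ℝ} (z : ι → E)
    (hw : ∑ i ∈ s, w i = 1) (p : E) :
    ∑ i ∈ s, w i * ‖z i - p‖ ^ 2 =
      ∑ i ∈ s, w i * ‖z i - s.centerMass w z‖ ^ 2 + ‖s.centerMass w z - p‖ ^ 2 := by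
  set c := s.centerMass w z
  have hbalance : ∑ i ∈ s, w i • (z i - c) = 0 := by
    simp only [smul_sub, sum_sub_distrib, ← sum_smul, hw, one_smul, c,
      centerMass_eq_of_sum_1 _ _ hw, sub_self]
  have hexpand : ∀ i ∈ s, w i * ‖z i - p‖ ^ 2 =
      w i * ‖z i - c‖ ^ 2 + 2 * ⟪w i • (z i - c), c - p⟫ + w i * ‖c - p‖ ^ 2 := by
    intro i _
    rw [show z i - p = (z i - c) + (c - p) by abel, norm_add_sq_real, real_inner_smul_left]
    ring
  rw [sum_congr rfl hexpand, sum_add_distrib, sum_add_distrib, ← mul_sum, ← sum_inner, hbalance,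
    inner_zero_left, ← sum_mul, hw]
  ring

theorem two_mul_sq_mul_card_le_of_mem_convexHull {T : Finset E} {c : E} {ρ D : ℝ}
    (hc : c ∈ convexHull ℝ (T : Set E)) (hρ : ∀ p ∈ T, dist p c = ρ)
    (hD : ∀ p ∈ T, ∀ q ∈ T, dist p q ≤ D) :
    2 * ρ ^ 2 * #T ≤ D ^ 2 * (#T - 1) := by
  classical
  rw [Finset.convexHull_eq] at hc
  obtain ⟨w, hw₀, hw₁, hcw⟩ := hc
  have hvertex : ∀ p ∈ T, 2 * ρ ^ 2 ≤ D ^ 2 * (1 - w p) := by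
    intro p hp
    calc 2 * ρ ^ 2 = ∑ q ∈ T, w q * dist q c ^ 2 + dist c p ^ 2 := by
          rw [sum_congr rfl fun q hq => by rw [hρ q hq], ← sum_mul, hw₁, dist_comm, hρ p hp]
          ring
      _ = ∑ q ∈ T, w q * ‖q - p‖ ^ 2 := by
          simpa [dist_eq_norm, hcw] using (sum_mul_norm_sub_sq_eq T id hw₁ p).symm
      _ = ∑ q ∈ T.erase p, w q * ‖q - p‖ ^ 2 := by
          rw [← sum_erase_add _ _ hp, sub_self, norm_zero]
          ring
      _ ≤ ∑ q ∈ T.erase p, w q * D ^ 2 := by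
          refine sum_le_sum fun q hq => mul_le_mul_of_nonneg_left ?_ (hw₀ q (mem_of_mem_erase hq))
          rw [← dist_eq_norm]
          exact pow_le_pow_left₀ dist_nonneg (hD q (mem_of_mem_erase hq) p hp) 2
      _ = D ^ 2 * (1 - w p) := by
          rw [← sum_mul, sum_erase_eq_sub hp, hw₁]
          ring
  have hcs : 1 ≤ #T * ∑ p ∈ T, w p ^ 2 := by
    simpa [hw₁] using sq_sum_le_card_mul_sum_sq (s := T) (f := w)
  have havg : 2 * ρ ^ 2 ≤ D ^ 2 * (1 - ∑ p ∈ T, w p ^ 2) := by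
    calc 2 * ρ ^ 2 = ∑ p ∈ T, w p * (2 * ρ ^ 2) := by rw [← sum_mul, hw₁, one_mul]
      _ ≤ ∑ p ∈ T, w p * (D ^ 2 * (1 - w p)) :=
          sum_le_sum fun p hp => mul_le_mul_of_nonneg_left (hvertex p hp) (hw₀ p hp)
      _ = D ^ 2 * (∑ p ∈ T, w p - ∑ p ∈ T, w p ^ 2) := by
          rw [mul_sub, mul_sum, mul_sum, ← sum_sub_distrib]
          exact sum_congr rfl fun _ _ => by ring
      _ = D ^ 2 * (1 - ∑ p ∈ T, w p ^ 2) := by rw [hw₁]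
  nlinarith [sq_nonneg D]

variable [FiniteDimensional ℝ E]

theorem Finset.exists_forall_dist_le_sqrt_mul_of_card_le (S : Finset E) {D : ℝ} (hD : 0 ≤ D)
    (hcard : #S ≤ finrank ℝ E + 1) (hS : ∀ p ∈ S, ∀ q ∈ S, dist p q ≤ D) :
    ∃ c : E, ∀ p ∈ S, dist p c ≤ √(finrank ℝ E / (2 * finrank ℝ E + 2)) * D := by
  rcases S.eq_empty_or_nonempty with rfl | hne
  · exact ⟨0, by simp⟩
  obtain ⟨c, hc⟩ := S.exists_forall_sup'_dist_le hne
  set T := {p ∈ S | dist p c = S.sup' hne (dist · c)}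
  obtain ⟨p₀, hp₀, hp₀_far⟩ := exists_mem_eq_sup' hne (dist · c)
  have hT : 1 ≤ #T := card_pos.2 ⟨p₀, mem_filter.2 ⟨hp₀, hp₀_far.symm⟩⟩
  have hbound := two_mul_sq_mul_card_le_of_mem_convexHull
    (S.mem_convexHull_farthest_of_forall_sup'_dist_le hne hc) (fun p hp => (mem_filter.1 hp).2)
    (fun p hp q hq => hS p (filter_subset _ S hp) q (filter_subset _ S hq))
  refine ⟨c, fun p hp => (le_sup' (dist · c) hp).trans ?_⟩
  refine le_sqrt_div_mul_of_two_mul_sq_mul_le hD (by exact_mod_cast hT) ?_ hbound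
  exact_mod_cast (card_filter_le S _).trans hcard

theorem exists_subset_closedBall_sqrt_mul_diam {A : Set E} (hA : Bornology.IsBounded A) :
    ∃ c : E, A ⊆ closedBall c (√(finrank ℝ E / (2 * finrank ℝ E + 2)) * diam A) := by
  set r := √(finrank ℝ E / (2 * finrank ℝ E + 2)) * diam A
  have hfew : ∀ I : Finset A, #I ≤ finrank ℝ E + 1 →
      (⋂ a ∈ I, closedBall (a : E) r).Nonempty := by
    intro I hI
    obtain ⟨c, hc⟩ := (I.map (.subtype (· ∈ A))).exists_forall_dist_le_sqrt_mul_of_card_le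
      diam_nonneg (by simpa using hI)
      (by simpa using fun p hp _ q hq _ => dist_le_diam_of_mem hA hp hq)
    exact ⟨c, Set.mem_iInter₂.2 fun a ha => mem_closedBall_comm.1 (hc a (mem_map_of_mem _ ha))⟩
  obtain ⟨c, hc⟩ := Convex.helly_theorem_compact' (fun _ => convex_closedBall _ _)
    (fun _ => isCompact_closedBall _ _) hfew
  exact ⟨c, fun x hx => mem_closedBall_comm.1 (Set.mem_iInter.1 hc ⟨x, hx⟩)⟩

end InnerProductSpace

theorem stmt4 {d : ℕ} (A : Set (Euc d)) (hA : Bornology.IsBounded A) :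
    ∃ c : Euc d,
      A ⊆ Metric.closedBall c (Real.sqrt (d / (2 * d + 2)) * Metric.diam A) := by
  simpa using exists_subset_closedBall_sqrt_mul_diam hA
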